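/- arXiv:1608.08508 — 3 statements merged into one kernel-verified Lean document; each statement's English description precedes it below -/
import Mathlib

section
/- Let p be prime, ℤ_p the localization of ℤ at p, and α, β distinct nonzero integers with v_p(α) = v_p(β) ≤ v_p(β−α). Let r₂ < r₃ be nonnegative integers with v_p(β−α) ≤ r₂, and let a ∈ ℤ_p satisfy p^{r₂} + a(β−α) ∈ p^{r₃}ℤ_p. Then v_p(p^{r₂} − αa) = r₂ + v_p(α) − v_p(β−α). -/
/-- `ℤ_p`, the localization of `ℤ` at the prime `p`. -/
instance Zp.isPrime (p : ℕ) [Fact p.Prime] : (Ideal.span {(p : ℤ)}).IsPrime := by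
  rw [Ideal.span_singleton_prime (by exact_mod_cast (Fact.out : p.Prime).ne_zero)]
  exact Nat.prime_iff_prime_int.mp Fact.out

abbrev Zp (p : ℕ) [Fact p.Prime] : Type := Localization.AtPrime (Ideal.span {(p : ℤ)})
/-- Let `α, β` be distinct nonzero integers with `v_p(α) = v_p(β) ≤ v_p(β−α)`.
Let `r₂ < r₃` with `v_p(β−α) ≤ r₂`, and let `a ∈ ℤ_p` satisfy
`p^{r₂} + a(β−α) ∈ p^{r₃}ℤ_p`. Then `v_p(p^{r₂} − αa) = r₂ + v_p(α) − v_p(β−α)`. -/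
theorem stmt9 (p : ℕ) [Fact p.Prime] (α β : ℤ)
    (hα : α ≠ 0) (hβ : β ≠ 0) (hαβ : α ≠ β)
    (kα kd : ℕ) (hkα : Ideal.span {((α : ℤ) : Zp p)} = Ideal.span {(p : Zp p) ^ kα})
    (hkβ : Ideal.span {((β : ℤ) : Zp p)} = Ideal.span {(p : Zp p) ^ kα})
    (hkd : Ideal.span {((β - α : ℤ) : Zp p)} = Ideal.span {(p : Zp p) ^ kd})
    (hle : kα ≤ kd) (r₂ r₃ : ℕ) (hr : r₂ < r₃) (hr₂ : kd ≤ r₂)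
    (a : Zp p)
    (ha : (p : Zp p) ^ r₂ + a * ((β - α : ℤ) : Zp p) ∈ Ideal.span {(p : Zp p) ^ r₃}) :
    Ideal.span {(p : Zp p) ^ r₂ - ((α : ℤ) : Zp p) * a}
      = Ideal.span {(p : Zp p) ^ (r₂ + kα - kd)} := by
  -- notation
  set A : Zp p := ((α : ℤ) : Zp p) with hA
  set B : Zp p := ((β : ℤ) : Zp p) with hB
  set D : Zp p := ((β - α : ℤ) : Zp p) with hDdef
  have hD : D = B - A := by rw [hDdef, hA, hB]; push_cast; ring
  -- p is not a unit in Zp p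
  have hpmap : ((p : ℤ) : Zp p) = (p : Zp p) := by push_cast; ring
  have hpunit : ¬ IsUnit ((p : Zp p)) := by
    rw [← hpmap]
    intro hu
    have h := (IsLocalization.AtPrime.isUnit_to_map_iff (Zp p)
      (Ideal.span {(p : ℤ)}) (p : ℤ)).mp (by rwa [eq_intCast])
    exact h (Ideal.mem_span_singleton_self _)
  -- p is nonzero in Zp p
  have hinj : Function.Injective (algebraMap ℤ (Zp p)) :=
    IsLocalization.injective (Zp p) (Ideal.span {(p : ℤ)}).primeCompl_le_nonZeroDivisors
  have hp0 : (p : Zp p) ≠ 0 := by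
    rw [← hpmap]
    intro h
    have h2 : (p : ℤ) = 0 := hinj (by rw [eq_intCast, eq_intCast]; simpa using h)
    exact (Fact.out : p.Prime).ne_zero (by exact_mod_cast h2)
  -- turn span equalities into Associated statements
  rw [Ideal.span_singleton_eq_span_singleton] at hkα hkβ hkd ⊢
  obtain ⟨uα, huα⟩ := hkα
  obtain ⟨uβ, huβ⟩ := hkβ
  obtain ⟨ud, hud⟩ := hkd
  obtain ⟨u, hu⟩ := Ideal.mem_span_singleton.mp ha
  set X : Zp p := (p : Zp p) ^ r₂ - A * a with hX
  set q : Zp p := (p : Zp p) ^ (r₃ - r₂) with hqdef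
  have hq : (p : Zp p) ^ r₂ * q = (p : Zp p) ^ r₃ := by
    rw [hqdef, ← pow_add]; congr 1; omega
  -- key computation
  have e1 : D * X = (p : Zp p) ^ r₂ * B - (p : Zp p) ^ r₃ * (A * u) := by
    linear_combination (p : Zp p) ^ r₂ * hD - A * hu
  have e2 : (uα : Zp p) * uβ * (D * X)
      = (p : Zp p) ^ r₂ * (p : Zp p) ^ kα * (uα : Zp p)
        - (p : Zp p) ^ r₃ * (p : Zp p) ^ kα * ((u : Zp p) * uβ) := by
    linear_combination ((uα : Zp p) * uβ) * e1 + ((p : Zp p) ^ r₂ * (uα : Zp p)) * huβ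
      - ((p : Zp p) ^ r₃ * u * (uβ : Zp p)) * huα
  have e3 : (uα : Zp p) * uβ * (D * X)
      = (p : Zp p) ^ r₂ * (p : Zp p) ^ kα * ((uα : Zp p) - q * ((u : Zp p) * uβ)) := by
    linear_combination e2 + ((p : Zp p) ^ kα * u * (uβ : Zp p)) * hq
  set w : Zp p := (ud : Zp p) * ((uα : Zp p) - q * ((u : Zp p) * uβ)) with hwdef
  have e4 : (p : Zp p) ^ kd * ((uα : Zp p) * uβ * X) = (p : Zp p) ^ r₂ * (p : Zp p) ^ kα * w := by
    linear_combination (ud : Zp p) * e3 - ((uα : Zp p) * uβ * X) * hud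
  have e5 : (p : Zp p) ^ r₂ * (p : Zp p) ^ kα
      = (p : Zp p) ^ kd * (p : Zp p) ^ (r₂ + kα - kd) := by
    rw [← pow_add, ← pow_add]; congr 1; omega
  have e6 : (uα : Zp p) * uβ * X = (p : Zp p) ^ (r₂ + kα - kd) * w := by
    apply mul_left_cancel₀ (pow_ne_zero kd hp0)
    rw [e4, e5]; ring
  -- w is a unit
  have hz : ¬ IsUnit (q * ((u : Zp p) * uβ)) := by
    intro h
    have hq' : IsUnit q := isUnit_of_mul_isUnit_left h
    rw [hqdef, isUnit_pow_iff (by omega : r₃ - r₂ ≠ 0)] at hq'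
    exact hpunit hq'
  have hwu : IsUnit w := by
    rw [hwdef]
    refine (ud.isUnit).mul ?_
    have hsum : IsUnit (((uα : Zp p) - q * ((u : Zp p) * uβ)) + q * ((u : Zp p) * uβ)) := by
      simp only [sub_add_cancel]; exact uα.isUnit
    rcases IsLocalRing.isUnit_or_isUnit_of_isUnit_add hsum with h | h
    · exact h
    · exact absurd h hz
  -- conclude
  apply associated_of_dvd_dvd
  · -- X ∣ p ^ (r₂ + kα - kd)
    have h1 : X ∣ (p : Zp p) ^ (r₂ + kα - kd) * w := by
      rw [← e6]; exact Dvd.intro_left _ rfl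
    exact (hwu.dvd_mul_right).mp h1
  · -- p ^ (r₂ + kα - kd) ∣ X
    have h1 : (p : Zp p) ^ (r₂ + kα - kd) ∣ (uα : Zp p) * uβ * X := by
      rw [e6]; exact dvd_mul_right _ _
    have h2 : (p : Zp p) ^ (r₂ + kα - kd) ∣ (uβ : Zp p) * X := (uα.isUnit.dvd_mul_left).mp
      (by rwa [mul_assoc] at h1)
    exact (uβ.isUnit.dvd_mul_left).mp h2
end

section
/- Let p be prime, let G = ℤ_p × ℤ_p, and let g, b, c, d, e ∈ ℤ_p with b, c, d, e nonzero. Define H = {(y,z) ∈ G : dy ∈ eℤ_p and gy + bz ∈ cℤ_p}. If v_p(g) + max(0, v_p(e)−v_p(d)) ≤ v_p(b) ≤ v_p(c), then H is a free ℤ_p-submodule of G with basis {(−b/g, 1), (c/g, 0)} and the index [G : H] equals p^{v_p(c) − v_p(g)}. -/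
section Aux
variable (p : ℕ) [Fact p.Prime]

lemma Zp.inj : Function.Injective (algebraMap ℤ (Zp p)) :=
  IsLocalization.injective _ (Ideal.span {(p:ℤ)}).primeCompl_le_nonZeroDivisors

lemma Zp.coprime_of_mem {s : ℤ} (hs : s ∈ (Ideal.span {(p:ℤ)}).primeCompl) (k : ℕ) :
    IsCoprime ((p:ℤ)^k) s := by
  have hp : Prime (p:ℤ) := Nat.prime_iff_prime_int.mp Fact.out
  exact (hp.coprime_iff_not_dvd.mpr fun h => hs (Ideal.mem_span_singleton.mpr h)).pow_left

lemma Zp.card_quot (k : ℕ) :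
    Nat.card ((Zp p) ⧸ (Ideal.span {(p : Zp p) ^ k})) = p ^ k := by
  set I : Ideal (Zp p) := Ideal.span {(p : Zp p) ^ k} with hI
  set f : ℤ →+* (Zp p) ⧸ I := (Ideal.Quotient.mk I).comp (algebraMap ℤ (Zp p)) with hf
  have hsurj : Function.Surjective f := by
    intro x
    obtain ⟨x, rfl⟩ := Ideal.Quotient.mk_surjective x
    obtain ⟨⟨a, s⟩, hx⟩ := IsLocalization.surj (Ideal.span {(p:ℤ)}).primeCompl x
    obtain ⟨u, t, hut⟩ := Zp.coprime_of_mem p s.2 k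
    refine ⟨t * a, ?_⟩
    simp only [hf, RingHom.comp_apply]
    rw [Ideal.Quotient.mk_eq_mk_iff_sub_mem, hI, Ideal.mem_span_singleton]
    refine ⟨-(x * algebraMap ℤ (Zp p) u), ?_⟩
    have h2 : (t : ℤ) * s = 1 - u * (p:ℤ)^k := by linarith
    calc algebraMap ℤ (Zp p) (t*a) - x
        = algebraMap ℤ (Zp p) t * (x * algebraMap ℤ (Zp p) s) - x := by
          rw [map_mul, hx]
      _ = x * (algebraMap ℤ (Zp p) ((t:ℤ) * s) - 1) := by rw [map_mul]; ring
      _ = x * (algebraMap ℤ (Zp p) (1 - u * (p:ℤ)^k) - 1) := by rw [h2]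
      _ = (p : Zp p)^k * -(x * algebraMap ℤ (Zp p) u) := by
          simp only [map_sub, map_mul, map_pow, map_one, map_natCast]; ring
  have hker : RingHom.ker f = Ideal.span {(p:ℤ)^k} := by
    ext n
    simp only [RingHom.mem_ker, hf, RingHom.comp_apply, Ideal.Quotient.eq_zero_iff_mem, hI,
      Ideal.mem_span_singleton]
    constructor
    · rintro ⟨x, hx⟩
      obtain ⟨⟨a, s⟩, hxs⟩ := IsLocalization.surj (Ideal.span {(p:ℤ)}).primeCompl x
      have heq : algebraMap ℤ (Zp p) (n * s) = algebraMap ℤ (Zp p) ((p:ℤ)^k * a) := by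
        rw [map_mul, map_mul, hx, map_pow, map_natCast, mul_assoc, hxs]
      exact (Zp.coprime_of_mem p s.2 k).dvd_of_dvd_mul_right ⟨a, Zp.inj p heq⟩
    · rintro ⟨m, rfl⟩
      exact ⟨algebraMap ℤ (Zp p) m, by rw [map_mul, map_pow, map_natCast]⟩
  have e1 : (ℤ ⧸ Ideal.span {(p:ℤ)^k}) ≃+* (Zp p) ⧸ I :=
    (Ideal.quotEquivOfEq hker.symm).trans (RingHom.quotientKerEquivOfSurjective hsurj)
  have e2 : Ideal.span {((p^k : ℕ) : ℤ)} = Ideal.span {(p:ℤ)^k} := by norm_cast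
  calc Nat.card ((Zp p) ⧸ I) = Nat.card (ℤ ⧸ Ideal.span {(p:ℤ)^k}) :=
        (Nat.card_congr e1.toEquiv).symm
    _ = Nat.card (ZMod (p^k)) := Nat.card_congr ((Ideal.quotEquivOfEq e2.symm).trans
        (Int.quotientSpanNatEquivZMod (p^k))).toEquiv
    _ = p^k := Nat.card_zmod _

end Aux

/-- Let `G = ℤ_p × ℤ_p` and `g, b, c, d, e ∈ ℤ_p` nonzero (valuations given via
principal ideals), and `H = {(y,z) : dy ∈ eℤ_p ∧ gy + bz ∈ cℤ_p}`. If
`v_p(g) + max(0, v_p(e)−v_p(d)) ≤ v_p(b) ≤ v_p(c)` then `H` is the free `ℤ_p`-submodule of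
`G` with basis `{(−b/g, 1), (c/g, 0)}` and `[G : H] = p^{v_p(c) − v_p(g)}`. -/
theorem stmt13 (p : ℕ) [Fact p.Prime] (g b c d e : Zp p)
    (vg vb vc vd ve : ℕ)
    (hvg : Ideal.span {g} = Ideal.span {(p : Zp p) ^ vg})
    (hvb : Ideal.span {b} = Ideal.span {(p : Zp p) ^ vb})
    (hvc : Ideal.span {c} = Ideal.span {(p : Zp p) ^ vc})
    (hvd : Ideal.span {d} = Ideal.span {(p : Zp p) ^ vd})
    (hve : Ideal.span {e} = Ideal.span {(p : Zp p) ^ ve})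
    (h1 : vg + (ve - vd) ≤ vb) (h2 : vb ≤ vc) :
    ∃ b' c' : Zp p, g * b' = b ∧ g * c' = c ∧
      {yz : Zp p × Zp p | d * yz.1 ∈ Ideal.span {e} ∧ g * yz.1 + b * yz.2 ∈ Ideal.span {c}}
        = (Submodule.span (Zp p) {(-b', (1 : Zp p)), (c', 0)} : Set (Zp p × Zp p)) ∧
      LinearIndependent (Zp p) ![(-b', (1 : Zp p)), (c', (0 : Zp p))] ∧
      Nat.card ((Zp p × Zp p) ⧸ Submodule.span (Zp p) {(-b', (1 : Zp p)), (c', 0)})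
        = p ^ (vc - vg) := by
  have hp0 : (p : Zp p) ≠ 0 := by
    intro h
    have hinj := IsLocalization.injective (Zp p)
      (Ideal.span {(p:ℤ)}).primeCompl_le_nonZeroDivisors
    have h2 : algebraMap ℤ (Zp p) (p:ℤ) = algebraMap ℤ (Zp p) 0 := by
      rw [map_natCast, map_zero]; exact h
    exact (Fact.out : p.Prime).ne_zero (by exact_mod_cast hinj h2)
  have hppow : ∀ k : ℕ, ((p : Zp p) ^ k) ≠ 0 := fun k => pow_ne_zero k hp0
  have ag : Associated g ((p : Zp p) ^ vg) := Ideal.span_singleton_eq_span_singleton.mp hvg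
  have ab : Associated b ((p : Zp p) ^ vb) := Ideal.span_singleton_eq_span_singleton.mp hvb
  have ac : Associated c ((p : Zp p) ^ vc) := Ideal.span_singleton_eq_span_singleton.mp hvc
  have ad : Associated d ((p : Zp p) ^ vd) := Ideal.span_singleton_eq_span_singleton.mp hvd
  have ae : Associated e ((p : Zp p) ^ ve) := Ideal.span_singleton_eq_span_singleton.mp hve
  have hg0 : g ≠ 0 := fun h => hppow vg ((associated_zero_iff_eq_zero _).mp (h ▸ ag).symm)
  have hc0 : c ≠ 0 := fun h => hppow vc ((associated_zero_iff_eq_zero _).mp (h ▸ ac).symm)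
  have hgvb : vg ≤ vb := le_trans (Nat.le_add_right _ _) h1
  have hgvc : vg ≤ vc := le_trans hgvb h2
  obtain ⟨b', hb'⟩ : g ∣ b := ag.dvd.trans ((pow_dvd_pow _ hgvb).trans ab.symm.dvd)
  obtain ⟨c', hc'⟩ : g ∣ c := ag.dvd.trans ((pow_dvd_pow _ hgvc).trans ac.symm.dvd)
  have ab' : Associated b' ((p : Zp p) ^ (vb - vg)) := by
    refine Associated.of_mul_left ?_ ag hg0
    rw [← hb', ← pow_add, Nat.add_sub_cancel' hgvb]; exact ab
  have ac' : Associated c' ((p : Zp p) ^ (vc - vg)) := by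
    refine Associated.of_mul_left ?_ ag hg0
    rw [← hc', ← pow_add, Nat.add_sub_cancel' hgvc]; exact ac
  have hc'0 : c' ≠ 0 := fun h => hc0 (by rw [hc', h, mul_zero])
  -- key divisibilities
  have hdb : e ∣ d * b' := by
    refine ae.dvd.trans (dvd_trans (pow_dvd_pow _ (show ve ≤ vd + (vb - vg) by omega)) ?_)
    exact (pow_add (p : Zp p) vd (vb - vg) ▸ ((ad.mul_mul ab').symm.dvd))
  have hdc : e ∣ d * c' := by
    refine ae.dvd.trans (dvd_trans (pow_dvd_pow _ (show ve ≤ vd + (vc - vg) by omega)) ?_)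
    exact (pow_add (p : Zp p) vd (vc - vg) ▸ ((ad.mul_mul ac').symm.dvd))
  refine ⟨b', c', hb'.symm, hc'.symm, ?_, ?_, ?_⟩
  · -- set equality
    ext ⟨y, z⟩
    simp only [Set.mem_setOf_eq, SetLike.mem_coe, Submodule.mem_span_pair,
      Ideal.mem_span_singleton, Prod.smul_mk, smul_eq_mul, Prod.mk_add_mk, Prod.mk.injEq]
    constructor
    · rintro ⟨-, s, hs⟩
      refine ⟨z, s, ?_, by ring⟩
      have : g * (y + b' * z) = g * (c' * s) := by rw [hb', hc'] at hs; linear_combination hs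
      have heq := mul_left_cancel₀ hg0 this
      linear_combination -heq
    · rintro ⟨m, n, hy, hz⟩
      constructor
      · rw [show d * y = n * (d * c') - m * (d * b') by rw [← hy]; ring]
        exact dvd_sub (hdc.mul_left n) (hdb.mul_left m)
      · exact ⟨n, by rw [← hy, ← hz, hb', hc']; ring⟩
  · -- linear independence
    rw [LinearIndependent.pair_iff]
    intro s t hst
    rw [Prod.ext_iff] at hst
    simp only [Prod.smul_mk, smul_eq_mul, Prod.mk_add_mk, Prod.fst, Prod.snd, mul_one,
      mul_zero, add_zero, Prod.fst_zero, Prod.snd_zero] at hst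
    obtain ⟨h1', h2'⟩ := hst
    subst h2'
    simp only [zero_mul, zero_add] at h1'
    exact ⟨rfl, (mul_eq_zero.mp h1').resolve_right hc'0⟩
  · -- cardinality
    set J : Submodule (Zp p) (Zp p) := Ideal.span {c'} with hJ
    set φ : (Zp p × Zp p) →ₗ[Zp p] Zp p :=
      LinearMap.fst (Zp p) (Zp p) (Zp p) + b' • LinearMap.snd (Zp p) (Zp p) (Zp p) with hφ
    have hφ_apply : ∀ yz : Zp p × Zp p, φ yz = yz.1 + b' * yz.2 := fun yz => rfl
    set ψ := J.mkQ.comp φ with hψ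
    have hker : LinearMap.ker ψ = Submodule.span (Zp p) {(-b', (1 : Zp p)), (c', 0)} := by
      ext ⟨y, z⟩
      simp only [hψ, LinearMap.mem_ker, LinearMap.comp_apply, Submodule.mkQ_apply,
        Submodule.Quotient.mk_eq_zero, hφ_apply, hJ, Ideal.mem_span_singleton,
        Submodule.mem_span_pair, Prod.smul_mk, smul_eq_mul, Prod.mk_add_mk, Prod.mk.injEq]
      constructor
      · rintro ⟨s, hs⟩
        exact ⟨z, s, by linear_combination -hs, by ring⟩
      · rintro ⟨m, n, hy, hz⟩
        exact ⟨n, by rw [← hy, ← hz]; ring⟩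
    have hsurj : Function.Surjective ψ := by
      intro x
      obtain ⟨x, rfl⟩ := J.mkQ_surjective x
      exact ⟨(x, 0), by simp [hψ, hφ_apply]⟩
    have e1 := LinearMap.quotKerEquivOfSurjective ψ hsurj
    have hJ' : J = Ideal.span {(p : Zp p) ^ (vc - vg)} :=
      Ideal.span_singleton_eq_span_singleton.mpr ac'
    calc Nat.card ((Zp p × Zp p) ⧸ Submodule.span (Zp p) {(-b', (1 : Zp p)), (c', 0)})
        = Nat.card ((Zp p × Zp p) ⧸ LinearMap.ker ψ) :=
          Nat.card_congr (Submodule.quotEquivOfEq _ _ hker.symm).toEquiv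
      _ = Nat.card ((Zp p) ⧸ J) := Nat.card_congr e1.toEquiv
      _ = p ^ (vc - vg) := by rw [hJ']; exact Zp.card_quot p (vc - vg)
end

section
/- Let p be prime and g, b, c, d, e ∈ ℤ_p nonzero with v_p(b) ≤ v_p(c) ≤ v_p(g) + max(0, v_p(e)−v_p(d)). Then the ℤ_p-submodule H = {(y,z) ∈ ℤ_p² : dy ∈ eℤ_p and gy + bz ∈ cℤ_p} equals p^{max(0,v_p(e)−v_p(d))}ℤ_p × p^{max(0,v_p(c)−v_p(b))}ℤ_p, so [ℤ_p² : H] = p^{max(0,v_p(e)−v_p(d)) + max(0,v_p(c)−v_p(b))}. -/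
theorem pow_dvd_pow_mul_iff {R : Type*} [CommMonoidWithZero R] [IsCancelMulZero R] {q : R}
    (hq : q ≠ 0) {a b : ℕ} {y : R} : q ^ a ∣ q ^ b * y ↔ q ^ (a - b) ∣ y := by
  rcases le_total a b with h | h
  · simp [Nat.sub_eq_zero_of_le h, dvd_mul_of_dvd_left (pow_dvd_pow q h)]
  · obtain ⟨k, rfl⟩ := Nat.exists_eq_add_of_le h
    rw [pow_add, Nat.add_sub_cancel_left, mul_dvd_mul_iff_left (pow_ne_zero _ hq)]

theorem Associated.dvd_mul_iff_pow_sub_dvd {R : Type*} [CommMonoidWithZero R]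
    [IsCancelMulZero R] {q b c : R} (hq : q ≠ 0) {m n : ℕ} (hc : Associated c (q ^ m))
    (hb : Associated b (q ^ n)) (z : R) : c ∣ b * z ↔ q ^ (m - n) ∣ z := by
  rw [hc.dvd_iff_dvd_left, (hb.mul_right z).dvd_iff_dvd_right, pow_dvd_pow_mul_iff hq]

theorem dvd_and_dvd_add_iff {R : Type*} [CommRing R] [IsDomain R] {q g b c d e : R}
    (hq : q ≠ 0) {vg vb vc vd ve : ℕ} (hg : Associated g (q ^ vg)) (hb : Associated b (q ^ vb))
    (hc : Associated c (q ^ vc)) (hd : Associated d (q ^ vd)) (he : Associated e (q ^ ve))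
    (hv : vc ≤ vg + (ve - vd)) (y z : R) :
    (e ∣ d * y ∧ c ∣ g * y + b * z) ↔ (q ^ (ve - vd) ∣ y ∧ q ^ (vc - vb) ∣ z) := by
  rw [he.dvd_mul_iff_pow_sub_dvd hq hd, ← hc.dvd_mul_iff_pow_sub_dvd hq hb]
  refine and_congr_right fun hy => dvd_add_right ?_
  calc c ∣ q ^ (vg + (ve - vd)) := hc.dvd.trans (pow_dvd_pow q hv)
    _ = q ^ vg * q ^ (ve - vd) := pow_add q _ _
    _ ∣ g * y := mul_dvd_mul hg.symm.dvd hy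

theorem Submodule.card_quotient_prod {R M N : Type*} [Ring R] [AddCommGroup M] [AddCommGroup N]
    [Module R M] [Module R N] (A : Submodule R M) (B : Submodule R N) :
    Nat.card ((M × N) ⧸ A.prod B) = Nat.card (M ⧸ A) * Nat.card (N ⧸ B) :=
  AddSubgroup.index_prod A.toAddSubgroup B.toAddSubgroup

theorem Zp.span_pow_eq_maximalIdeal_pow (p : ℕ) [Fact p.Prime] (k : ℕ) :
    Ideal.span {(p : Zp p) ^ k} = IsLocalRing.maximalIdeal (Zp p) ^ k := by
  rw [← IsLocalization.AtPrime.map_eq_maximalIdeal (Ideal.span {(p : ℤ)}), Ideal.map_span,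
    Set.image_singleton, Ideal.span_singleton_pow, map_natCast]

theorem Zp.natCast_ne_zero (p : ℕ) [Fact p.Prime] : (p : Zp p) ≠ 0 := by
  simpa using (IsLocalization.injective (Zp p)
    (Ideal.span {(p : ℤ)}).primeCompl_le_nonZeroDivisors).ne
    (Int.natCast_ne_zero.mpr (Fact.out : p.Prime).ne_zero)

theorem Zp.card_quotient_span_pow (p : ℕ) [Fact p.Prime] (k : ℕ) :
    Nat.card (Zp p ⧸ Ideal.span {(p : Zp p) ^ k}) = p ^ k := by
  rw [Zp.span_pow_eq_maximalIdeal_pow, ← Nat.card_congr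
    (IsLocalization.AtPrime.equivQuotMaximalIdealPow (Ideal.span {(p : ℤ)}) (Zp p) k).toEquiv,
    Ideal.span_singleton_pow,
    Nat.card_congr (Int.quotientSpanEquivZMod _).toEquiv, Nat.card_zmod, Int.natAbs_pow,
    Int.natAbs_natCast]

theorem stmt14_general (p : ℕ) [Fact p.Prime] (g b c d e : Zp p)
    (vg vb vc vd ve : ℕ)
    (hvg : Ideal.span {g} = Ideal.span {(p : Zp p) ^ vg})
    (hvb : Ideal.span {b} = Ideal.span {(p : Zp p) ^ vb})
    (hvc : Ideal.span {c} = Ideal.span {(p : Zp p) ^ vc})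
    (hvd : Ideal.span {d} = Ideal.span {(p : Zp p) ^ vd})
    (hve : Ideal.span {e} = Ideal.span {(p : Zp p) ^ ve})
    (h2 : vc ≤ vg + (ve - vd)) :
    {yz : Zp p × Zp p | d * yz.1 ∈ Ideal.span {e} ∧ g * yz.1 + b * yz.2 ∈ Ideal.span {c}}
      = (Submodule.prod (Ideal.span {(p : Zp p) ^ (ve - vd)}) (Ideal.span {(p : Zp p) ^ (vc - vb)})
          : Submodule (Zp p) (Zp p × Zp p)) ∧
    Nat.card ((Zp p × Zp p) ⧸
        (Submodule.prod (Ideal.span {(p : Zp p) ^ (ve - vd)}) (Ideal.span {(p : Zp p) ^ (vc - vb)})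
          : Submodule (Zp p) (Zp p × Zp p)))
      = p ^ ((ve - vd) + (vc - vb)) := by
  simp only [Ideal.span_singleton_eq_span_singleton] at hvg hvb hvc hvd hve
  refine ⟨?_, ?_⟩
  · ext ⟨y, z⟩
    simpa only [Set.mem_ofPred_eq, SetLike.mem_coe, Submodule.mem_prod,
      Ideal.mem_span_singleton] using
      dvd_and_dvd_add_iff (Zp.natCast_ne_zero p) hvg hvb hvc hvd hve h2 y z
  · rw [Submodule.card_quotient_prod, Zp.card_quotient_span_pow, Zp.card_quotient_span_pow,
      pow_add]

/-- Let `g, b, c, d, e ∈ ℤ_p` be nonzero with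
`v_p(b) ≤ v_p(c) ≤ v_p(g) + max(0, v_p(e)−v_p(d))`. Then
`H = {(y,z) ∈ ℤ_p² : dy ∈ eℤ_p ∧ gy + bz ∈ cℤ_p}` equals
`p^{max(0,ve−vd)}ℤ_p × p^{max(0,vc−vb)}ℤ_p`, so
`[ℤ_p² : H] = p^{max(0,ve−vd) + max(0,vc−vb)}` (truncated subtraction on `ℕ`). -/
theorem stmt14 (p : ℕ) [Fact p.Prime] (g b c d e : Zp p)
    (vg vb vc vd ve : ℕ)
    (hvg : Ideal.span {g} = Ideal.span {(p : Zp p) ^ vg})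
    (hvb : Ideal.span {b} = Ideal.span {(p : Zp p) ^ vb})
    (hvc : Ideal.span {c} = Ideal.span {(p : Zp p) ^ vc})
    (hvd : Ideal.span {d} = Ideal.span {(p : Zp p) ^ vd})
    (hve : Ideal.span {e} = Ideal.span {(p : Zp p) ^ ve})
    (h1 : vb ≤ vc) (h2 : vc ≤ vg + (ve - vd)) :
    {yz : Zp p × Zp p | d * yz.1 ∈ Ideal.span {e} ∧ g * yz.1 + b * yz.2 ∈ Ideal.span {c}}
      = (Submodule.prod (Ideal.span {(p : Zp p) ^ (ve - vd)}) (Ideal.span {(p : Zp p) ^ (vc - vb)})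
          : Submodule (Zp p) (Zp p × Zp p)) ∧
    Nat.card ((Zp p × Zp p) ⧸
        (Submodule.prod (Ideal.span {(p : Zp p) ^ (ve - vd)}) (Ideal.span {(p : Zp p) ^ (vc - vb)})
          : Submodule (Zp p) (Zp p × Zp p)))
      = p ^ ((ve - vd) + (vc - vb)) :=
  stmt14_general p g b c d e vg vb vc vd ve hvg hvb hvc hvd hve h2
end
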